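/- arXiv:2507.21955 — 7 statements merged into one kernel-verified Lean document; each statement's English description precedes it below -/
import Mathlib

section
/- If the singleton {α} is conflict-confining for an inconsistent knowledge base K = ⟨T, A⟩ (i.e., adding α to any repair of K preserves consistency), then every repair R of the extended knowledge base ⟨T, A ∪ {α}⟩ contains the assertion α. -/
/-- `R` is a repair of `⟨T, B⟩`: a `T`-consistent subset of `B` that is
maximal among `T`-consistent subsets of `B`. -/
def IsRepair {X : Type*} [DecidableEq X] (Cons : Finset X → Prop) (B R : Finset X) : Prop :=
  R ⊆ B ∧ Cons R ∧ ∀ R' : Finset X, R ⊆ R' → R' ⊆ B → Cons R' → R' = R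

theorem exists_isRepair_superset {X : Type*} [DecidableEq X] {Cons : Finset X → Prop}
    {B S : Finset X} (hSB : S ⊆ B) (hS : Cons S) :
    ∃ R, S ⊆ R ∧ IsRepair Cons B R := by
  have hfin : {T : Finset X | S ⊆ T ∧ T ⊆ B ∧ Cons T}.Finite :=
    B.powerset.finite_toSet.subset fun T hT => Finset.mem_powerset.mpr hT.2.1
  obtain ⟨R, hSR, ⟨-, hRB, hR⟩, hmax⟩ := hfin.exists_le_maximal ⟨subset_rfl, hSB, hS⟩
  exact ⟨R, hSR, hRB, hR, fun R' hRR' hR'B hR' =>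
    le_antisymm (hmax ⟨hSR.trans hRR', hR'B, hR'⟩ hRR') hRR'⟩

theorem stmt_0_general {X : Type*} [DecidableEq X]
    (Cons : Finset X → Prop)
    (A : Finset X) (α : X)
    (hcc : ∀ R : Finset X, IsRepair Cons A R → Cons (R ∪ {α})) :
    ∀ R : Finset X, IsRepair Cons (A ∪ {α}) R → α ∈ R := by
  intro R ⟨hRA, hR, hmax⟩
  by_contra hα
  rw [Finset.union_singleton, Finset.subset_insert_iff_of_notMem hα] at hRA
  obtain ⟨R₀, hRR₀, hR₀⟩ := exists_isRepair_superset hRA hR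
  have hR₀α : R₀ ∪ {α} = R :=
    hmax _ (hRR₀.trans Finset.subset_union_left)
      (Finset.union_subset_union hR₀.1 subset_rfl) (hcc R₀ hR₀)
  exact hα (hR₀α ▸ Finset.mem_union_right _ (Finset.mem_singleton_self α))

/-- if `{α}` is conflict-confining for the inconsistent KB `⟨T, A⟩`,
then every repair of `⟨T, A ∪ {α}⟩` contains `α`. -/
theorem stmt_0 {X : Type*} [DecidableEq X]
    (Cons : Finset X → Prop)
    (hdc : ∀ S S' : Finset X, S ⊆ S' → Cons S' → Cons S)
    (A : Finset X) (α : X)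
    (hinc : ¬ Cons A)
    (hcc : ∀ R : Finset X, IsRepair Cons A R → Cons (R ∪ {α})) :
    ∀ R : Finset X, IsRepair Cons (A ∪ {α}) R → α ∈ R :=
  stmt_0_general Cons A α hcc
end

section
/- If {α} is conflict-confining for an inconsistent knowledge base K = ⟨T, A⟩, then {α} is an AR-hypothesis for the observation α in K, meaning that every repair of ⟨T, A ∪ {α}⟩ entails α (since it contains α). -/
/-- Every consistent subset of `A` extends to a repair of `A`. -/
lemma exists_repair_ext {X : Type*} [DecidableEq X] (Cons : Finset X → Prop)
    (A R : Finset X) (hRA : R ⊆ A) (hR : Cons R) :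
    ∃ R₀ : Finset X, R ⊆ R₀ ∧ IsRepair Cons A R₀ := by
  classical
  set P := A.powerset.filter (fun S => R ⊆ S ∧ Cons S) with hP
  have hRP : R ∈ P := by
    simp [hP, Finset.mem_filter, Finset.mem_powerset, hRA, hR]
  obtain ⟨S, hSP, hmax⟩ := P.exists_max_image Finset.card ⟨R, hRP⟩
  simp only [hP, Finset.mem_filter, Finset.mem_powerset] at hSP
  refine ⟨S, hSP.2.1, hSP.1, hSP.2.2, ?_⟩
  intro R' hSR' hR'A hR'
  have hR'P : R' ∈ P := by
    simp [hP, Finset.mem_filter, Finset.mem_powerset, hR'A, hR',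
      hSP.2.1.trans hSR']
  exact (Finset.eq_of_subset_of_card_le hSR' (hmax R' hR'P)).symm

/-- if `{α}` is conflict-confining for the inconsistent KB `⟨T, A⟩`, then
`{α}` is an AR-hypothesis for `α` in `⟨T, A⟩`: every repair of `⟨T, A ∪ {α}⟩` entails `α`. -/
theorem stmt_1 {X : Type*} [DecidableEq X]
    (Cons : Finset X → Prop) (Ent : Finset X → X → Prop)
    (hdc : ∀ S S' : Finset X, S ⊆ S' → Cons S' → Cons S)
    (hmono : ∀ (S S' : Finset X) (β : X), S ⊆ S' → Ent S β → Ent S' β)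
    (A : Finset X) (α : X)
    (hself : Ent {α} α)
    (hinc : ¬ Cons A)
    (hcc : ∀ R : Finset X, IsRepair Cons A R → Cons (R ∪ {α})) :
    ∀ R : Finset X, IsRepair Cons (A ∪ {α}) R → Ent R α := by
  intro R hrep
  obtain ⟨hRB, hRc, hRmax⟩ := hrep
  have hαR : α ∈ R := by
    by_contra hα
    have hRA : R ⊆ A := by
      intro x hx
      rcases Finset.mem_union.mp (hRB hx) with h | h
      · exact h
      · exact absurd (Finset.mem_singleton.mp h ▸ hx) hα
    obtain ⟨R₀, hRR₀, hrep₀⟩ := exists_repair_ext Cons A R hRA hRc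
    have hcons : Cons (R ∪ {α}) := by
      refine hdc _ (R₀ ∪ {α}) (Finset.union_subset_union_left hRR₀) (hcc R₀ hrep₀)
    have := hRmax (R ∪ {α}) Finset.subset_union_left
      (Finset.union_subset_union_left hRA) hcons
    exact hα (this ▸ Finset.mem_union_right R (Finset.mem_singleton_self α))
  exact hmono {α} R α (Finset.singleton_subset_iff.mpr hαR) hself
end

section
/- If {α} is not conflict-confining for an inconsistent knowledge base K = ⟨T, A⟩, then no AR-hypothesis for α in K exists; that is, for every ABox H there is a repair R' of ⟨T, A ∪ H⟩ with ⟨T, R'⟩ ⊭ α. -/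
/-- if `{α}` is not conflict-confining for the inconsistent KB `⟨T, A⟩`,
then there is no AR-hypothesis for `α` in `⟨T, A⟩`: for every ABox `H` there is a
repair `R'` of `⟨T, A ∪ H⟩` that does not entail `α`. -/
theorem stmt_2 {X : Type*} [DecidableEq X]
    (Cons : Finset X → Prop) (Ent : Finset X → X → Prop)
    (hdc : ∀ S S' : Finset X, S ⊆ S' → Cons S' → Cons S)
    (hmono : ∀ (S S' : Finset X) (β : X), S ⊆ S' → Ent S β → Ent S' β)
    (hext : ∀ B S : Finset X, S ⊆ B → Cons S → ∃ R, S ⊆ R ∧ IsRepair Cons B R)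
    (A : Finset X) (α : X)
    (hconsadd : ∀ R : Finset X, Cons R → Ent R α → Cons (R ∪ {α}))
    (hinc : ¬ Cons A)
    (hncc : ∃ R : Finset X, IsRepair Cons A R ∧ ¬ Cons (R ∪ {α})) :
    ∀ H : Finset X, ∃ R' : Finset X, IsRepair Cons (A ∪ H) R' ∧ ¬ Ent R' α := by
  intro H
  obtain ⟨R, ⟨hRA, hRC, _⟩, hRbad⟩ := hncc
  obtain ⟨R', hRR', hrep⟩ := hext (A ∪ H) R (hRA.trans Finset.subset_union_left) hRC
  refine ⟨R', hrep, fun hent => ?_⟩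
  exact hRbad (hdc _ _ (Finset.union_subset_union hRR' (le_refl _))
    (hconsadd R' hrep.2.1 hent))
end

section
/- For an AR-abduction problem ⟨K, α⟩ with K an inconsistent knowledge base, the following are equivalent: (1) there exists an AR-hypothesis for α in K; (2) the singleton {α} is an AR-hypothesis for α in K; (3) {α} is conflict-confining for K. -/
/-- `H` is an AR-hypothesis for `α` in `⟨T, A⟩`:
every repair of `⟨T, A ∪ H⟩` entails `α`. -/
def IsARHyp {X : Type*} [DecidableEq X] (Cons : Finset X → Prop) (Ent : Finset X → X → Prop)
    (A : Finset X) (α : X) (H : Finset X) : Prop :=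
  ∀ R : Finset X, IsRepair Cons (A ∪ H) R → Ent R α

/-- for an AR-abduction problem `⟨⟨T, A⟩, α⟩` with `⟨T, A⟩` inconsistent,
the following are equivalent: (1) some AR-hypothesis for `α` exists;
(2) `{α}` is an AR-hypothesis for `α`; (3) `{α}` is conflict-confining for `⟨T, A⟩`. -/
theorem stmt_4 {X : Type*} [DecidableEq X]
    (Cons : Finset X → Prop) (Ent : Finset X → X → Prop)
    (hdc : ∀ S S' : Finset X, S ⊆ S' → Cons S' → Cons S)
    (hmono : ∀ (S S' : Finset X) (β : X), S ⊆ S' → Ent S β → Ent S' β)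
    (hext : ∀ B S : Finset X, S ⊆ B → Cons S → ∃ R, S ⊆ R ∧ IsRepair Cons B R)
    (hconsadd : ∀ (R : Finset X) (β : X), Cons R → Ent R β → Cons (R ∪ {β}))
    (A : Finset X) (α : X)
    (hself : Ent {α} α)
    (hinc : ¬ Cons A) :
    ((∃ H : Finset X, IsARHyp Cons Ent A α H) ↔ IsARHyp Cons Ent A α {α}) ∧
    (IsARHyp Cons Ent A α {α} ↔ ∀ R : Finset X, IsRepair Cons A R → Cons (R ∪ {α})) := by
  -- (3) → (2)
  have h32 : (∀ R : Finset X, IsRepair Cons A R → Cons (R ∪ {α})) →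
      IsARHyp Cons Ent A α {α} := by
    intro h3 R hR
    obtain ⟨hRsub, hRcons, hRmax⟩ := hR
    by_cases hα : α ∈ R
    · exact hmono {α} R α (Finset.singleton_subset_iff.mpr hα) hself
    · exfalso
      have hRA : R ⊆ A := by
        intro x hx
        rcases Finset.mem_union.mp (hRsub hx) with h | h
        · exact h
        · exact absurd (Finset.mem_singleton.mp h ▸ hx) hα
      have hRrep : IsRepair Cons A R :=
        ⟨hRA, hRcons, fun R' h1 h2 h3' =>
          hRmax R' h1 (h2.trans Finset.subset_union_left) h3'⟩
      have hcons := h3 R hRrep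
      have := hRmax (R ∪ {α}) Finset.subset_union_left
        (Finset.union_subset (hRA.trans Finset.subset_union_left)
          Finset.subset_union_right) hcons
      exact hα (this ▸ Finset.mem_union_right R (Finset.mem_singleton_self α))
  -- (2) → (3)
  have h23 : IsARHyp Cons Ent A α {α} →
      ∀ R : Finset X, IsRepair Cons A R → Cons (R ∪ {α}) := by
    intro h2 R hR
    obtain ⟨R', hRR', hR'rep⟩ := hext (A ∪ {α}) R
      (hR.1.trans Finset.subset_union_left) hR.2.1
    have hent := h2 R' hR'rep
    have hcons := hconsadd R' α hR'rep.2.1 hent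
    exact hdc _ _ (Finset.union_subset_union_left hRR') hcons
  -- (1) → (3)
  have h13 : (∃ H : Finset X, IsARHyp Cons Ent A α H) →
      ∀ R : Finset X, IsRepair Cons A R → Cons (R ∪ {α}) := by
    rintro ⟨H, hH⟩ R hR
    obtain ⟨R', hRR', hR'rep⟩ := hext (A ∪ H) R
      (hR.1.trans Finset.subset_union_left) hR.2.1
    have hent := hH R' hR'rep
    have hcons := hconsadd R' α hR'rep.2.1 hent
    exact hdc _ _ (Finset.union_subset_union_left hRR') hcons
  exact ⟨⟨fun h => h32 (h13 h), fun h => ⟨{α}, h⟩⟩, ⟨h23, h32⟩⟩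
end

section
/- An assertion α is contained in every repair of a knowledge base ⟨T, B⟩ if and only if α is contained in no conflict of ⟨T, B⟩, where a conflict is a subset-minimal T-inconsistent subset of B. (Assume α ∈ B and {α} is T-consistent.) -/
/-- `C` is a conflict of `⟨T, B⟩`: a subset-minimal `T`-inconsistent subset of `B`. -/
def IsConflict {X : Type*} [DecidableEq X] (Cons : Finset X → Prop) (B C : Finset X) : Prop :=
  C ⊆ B ∧ ¬ Cons C ∧ ∀ C' : Finset X, C' ⊂ C → Cons C'

/-- under the stated assumptions, `α` is contained in every repair of
`⟨T, B⟩` iff `α` is contained in no conflict of `⟨T, B⟩`. -/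
theorem stmt_8 {X : Type*} [DecidableEq X]
    (Cons : Finset X → Prop)
    (hdc : ∀ S S' : Finset X, S ⊆ S' → Cons S' → Cons S)
    (B : Finset X) (α : X)
    (hmem : α ∈ B) (hsing : Cons {α})
    (hext : ∀ S : Finset X, S ⊆ B → Cons S → ∃ R, S ⊆ R ∧ IsRepair Cons B R)
    (hconf : ∀ S : Finset X, ¬ Cons S → ∃ C : Finset X, C ⊆ S ∧ IsConflict Cons S C) :
    (∀ R : Finset X, IsRepair Cons B R → α ∈ R) ↔
      (∀ C : Finset X, IsConflict Cons B C → α ∉ C) := by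
  constructor
  · intro hall C hC hαC
    obtain ⟨hCB, hnC, hmin⟩ := hC
    have hssub : C.erase α ⊂ C := Finset.erase_ssubset hαC
    have hcons : Cons (C.erase α) := hmin _ hssub
    obtain ⟨R, hCR, hrep⟩ := hext _ ((Finset.erase_subset _ _).trans hCB) hcons
    have hαR : α ∈ R := hall R hrep
    have hCR' : C ⊆ R := by
      intro x hx
      by_cases hxα : x = α
      · exact hxα ▸ hαR
      · exact hCR (Finset.mem_erase.mpr ⟨hxα, hx⟩)
    exact hnC (hdc _ _ hCR' hrep.2.1)
  · intro hnone R hR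
    by_contra hαR
    obtain ⟨hRB, hRC, hmax⟩ := hR
    have hsub : insert α R ⊆ B := Finset.insert_subset hmem hRB
    have hnc : ¬ Cons (insert α R) := by
      intro h
      have := hmax _ (Finset.subset_insert _ _) hsub h
      exact hαR (this ▸ Finset.mem_insert_self α R)
    obtain ⟨C, hCS, hCB2, hnC, hmin⟩ := hconf _ hnc
    have : IsConflict Cons B C := ⟨hCS.trans hsub, hnC, hmin⟩
    have hαC : α ∉ C := hnone C this
    have : C ⊆ R := by
      intro x hx
      rcases Finset.mem_insert.mp (hCS hx) with h | h
      · exact absurd (h ▸ hx) hαC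
      · exact h
    exact hnC (hdc _ _ this hRC)
end

section
/- Suppose that with respect to the TBox T, every subset-minimal T-support of an assertion α has size 1 (as holds in DL-Lite for atomic observations). Then every ⊆-minimal brave-hypothesis H for a brave-abduction problem ⟨K, α⟩ has cardinality exactly 1. -/
/-- `H` is a brave-hypothesis for `α` in `⟨T, A⟩`:
some repair of `⟨T, A ∪ H⟩` entails `α`. -/
def IsBraveHyp {X : Type*} [DecidableEq X] (Cons : Finset X → Prop) (Ent : Finset X → X → Prop)
    (A : Finset X) (α : X) (H : Finset X) : Prop :=
  ∃ R : Finset X, IsRepair Cons (A ∪ H) R ∧ Ent R α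

/-- if every `T`-support of `α` contains a `T`-support of size 1,
then every `⊆`-minimal brave-hypothesis for the brave-abduction problem `⟨⟨T, A⟩, α⟩`
has cardinality exactly 1. -/
theorem stmt_9 {X : Type*} [DecidableEq X]
    (Cons : Finset X → Prop) (Ent : Finset X → X → Prop)
    (hdc : ∀ S S' : Finset X, S ⊆ S' → Cons S' → Cons S)
    (hmono : ∀ (S S' : Finset X) (β : X), S ⊆ S' → Ent S β → Ent S' β)
    (hext : ∀ B S : Finset X, S ⊆ B → Cons S → ∃ R, S ⊆ R ∧ IsRepair Cons B R)
    (A : Finset X) (α : X)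
    (hsupp : ∀ S : Finset X, Cons S → Ent S α → ∃ β ∈ S, Cons {β} ∧ Ent {β} α)
    (hnb : ¬ ∃ R : Finset X, IsRepair Cons A R ∧ Ent R α)
    (H : Finset X)
    (hH : IsBraveHyp Cons Ent A α H)
    (hmin : ∀ H' : Finset X, H' ⊂ H → ¬ IsBraveHyp Cons Ent A α H') :
    H.card = 1 := by
  obtain ⟨R, ⟨hRsub, hRcons, hRmax⟩, hRent⟩ := hH
  obtain ⟨β, hβR, hβcons, hβent⟩ := hsupp R hRcons hRent
  -- {β} is a brave-hypothesis
  have hbrave : IsBraveHyp Cons Ent A α {β} := by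
    obtain ⟨R', hR'sub, hR'rep⟩ := hext (A ∪ {β}) {β}
      (Finset.subset_union_right) hβcons
    exact ⟨R', hR'rep, hmono {β} R' α hR'sub hβent⟩
  -- β ∉ A, else A itself braves α
  have hβA : β ∉ A := by
    intro hβA
    apply hnb
    obtain ⟨R', hR'sub, hR'rep⟩ := hext A {β}
      (Finset.singleton_subset_iff.mpr hβA) hβcons
    exact ⟨R', hR'rep, hmono {β} R' α hR'sub hβent⟩
  have hβH : β ∈ H := by
    rcases Finset.mem_union.mp (hRsub hβR) with h | h
    · exact absurd h hβA
    · exact h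
  have hsub : ({β} : Finset X) ⊆ H := Finset.singleton_subset_iff.mpr hβH
  have : ({β} : Finset X) = H := by
    by_contra hne
    exact hmin {β} (ssubset_of_subset_of_ne hsub hne) hbrave
  rw [← this]
  simp
end

section
/- If the consistency predicate is downward closed and every T-inconsistent set contains a conflict, then an ABox H is conflict-confining for K = ⟨T, A⟩ (i.e., Conf(⟨T, A ∪ H⟩) = Conf(K)) if and only if for every repair R of K, the set R ∪ H is T-consistent. -/
/-- The set of conflicts of `⟨T, B⟩`: subset-minimal `T`-inconsistent subsets of `B`. -/
def Conf {X : Type*} [DecidableEq X] (Cons : Finset X → Prop) (B : Finset X) :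
    Set (Finset X) :=
  {C | C ⊆ B ∧ ¬ Cons C ∧ ∀ C' : Finset X, C' ⊂ C → Cons C'}

/-- with a downward-closed consistency predicate such that every
`T`-inconsistent set contains a conflict, an ABox `H` (of new assertions) is
conflict-confining for `⟨T, A⟩`, i.e. `Conf(⟨T, A ∪ H⟩) = Conf(⟨T, A⟩)`,
iff `R ∪ H` is `T`-consistent for every repair `R` of `⟨T, A⟩`. -/
theorem stmt_19 {X : Type*} [DecidableEq X]
    (Cons : Finset X → Prop)
    (hdc : ∀ S S' : Finset X, S ⊆ S' → Cons S' → Cons S)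
    (hconf : ∀ S : Finset X, ¬ Cons S →
      ∃ C : Finset X, C ⊆ S ∧ ¬ Cons C ∧ ∀ C' : Finset X, C' ⊂ C → Cons C')
    (A H : Finset X)
    (hext : ∀ B S : Finset X, S ⊆ B → Cons S → ∃ R, S ⊆ R ∧ IsRepair Cons B R)
    (hnew : Disjoint H A) :
    Conf Cons (A ∪ H) = Conf Cons A ↔
      ∀ R : Finset X, IsRepair Cons A R → Cons (R ∪ H) := by
  constructor
  · intro hEq R hR
    by_contra hnc
    obtain ⟨C, hCsub, hCnc, hCmin⟩ := hconf _ hnc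
    have hCconf : C ∈ Conf Cons (A ∪ H) :=
      ⟨hCsub.trans (Finset.union_subset_union hR.1 (subset_refl H)), hCnc, hCmin⟩
    rw [hEq] at hCconf
    have hCA : C ⊆ A := hCconf.1
    have hCR : C ⊆ R := by
      intro x hx
      rcases Finset.mem_union.mp (hCsub hx) with h | h
      · exact h
      · exact absurd (hCA hx) (fun hA => Finset.disjoint_left.mp hnew h hA)
    exact hCnc (hdc _ _ hCR hR.2.1)
  · intro hRep
    ext C
    constructor
    · rintro ⟨hCsub, hCnc, hCmin⟩
      have hCA : C ⊆ A := by
        by_contra hnot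
        have hlt : C ∩ A ⊂ C := by
          refine ⟨Finset.inter_subset_left, ?_⟩
          intro hle
          exact hnot (fun x hx => (Finset.mem_inter.mp (hle hx)).2)
        have hcons : Cons (C ∩ A) := hCmin _ hlt
        obtain ⟨R, hsub, hRrep⟩ := hext A (C ∩ A) Finset.inter_subset_right hcons
        have hCRH : C ⊆ R ∪ H := by
          intro x hx
          rcases Finset.mem_union.mp (hCsub hx) with h | h
          · exact Finset.mem_union_left _ (hsub (Finset.mem_inter.mpr ⟨hx, h⟩))
          · exact Finset.mem_union_right _ h
        exact hCnc (hdc _ _ hCRH (hRep R hRrep))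
      exact ⟨hCA, hCnc, hCmin⟩
    · rintro ⟨hCsub, hCnc, hCmin⟩
      exact ⟨hCsub.trans Finset.subset_union_left, hCnc, hCmin⟩
end
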